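/- Let N ≥ 1, κ > 0, ε ∈ [0,1), θ ∈ [0, 1−ε), and W ≥ 0. Let (Q_k)_{k≥0} be invertible N×N real matrices with ‖Q_k^{−1}‖ ≤ 1/(κ(1−ε)) for all k, let (E_k)_{k≥0} be N×N real matrices with ‖E_k‖ ≤ κθ for all k, and let (w_k)_{k≥0} ⊂ ℝ^N satisfy ‖w_k‖₂ ≤ W for all k. Define v_0 = Q_0^{−1}w_0 and v_k = Q_k^{−1}(w_k − E_{k−1}v_{k−1}) for k ≥ 1. Then ‖v_k‖₂ ≤ W/(κ(1−ε−θ)) for all k ≥ 0; more precisely, ‖v_k‖₂ ≤ (Σ_{ℓ=0}^{k} θ^ℓ/(κ(1−ε)^{ℓ+1}))·W. -/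

import Mathlib

open Matrix

/-- Euclidean (ℓ²) norm of a vector in ℝ^n. -/
noncomputable def vecNorm {n : Type*} [Fintype n] (v : n → ℝ) : ℝ :=
  Real.sqrt (∑ i, v i ^ 2)

/-- Spectral norm (largest singular value) of a real matrix, defined as the operator
norm: the supremum of `‖A x‖₂` over unit vectors `x`. -/
noncomputable def matrixSpectralNorm {m n : Type*} [Fintype m] [Fintype n]
    (A : Matrix m n ℝ) : ℝ :=
  sSup ((fun x => vecNorm (A.mulVec x)) '' {x | vecNorm x = 1})

/-!
Taking norms in the recursion gives `‖v_{k+1}‖ ≤ q (W + κθ ‖v_k‖)` with `q = 1/(κ(1-ε))`, a scalar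
linear recursion with ratio `r = qκθ = θ/(1-ε) < 1`. Unrolling it bounds `‖v_k‖` by the partial
geometric sum `(∑_{l ≤ k} r^l) q W`, which is the stated sum and is at most
`q W / (1 - r) = W / (κ(1-ε-θ))`.
-/

open Finset

section

variable {m n : Type*} [Fintype m] [Fintype n]

lemma vecNorm_eq_norm (v : n → ℝ) : vecNorm v = ‖WithLp.toLp 2 v‖ := by
  simp [vecNorm, EuclideanSpace.norm_eq, sq_abs]

lemma vecNorm_nonneg (v : n → ℝ) : 0 ≤ vecNorm v :=
  Real.sqrt_nonneg _

lemma vecNorm_sub_le (a b : n → ℝ) : vecNorm (a - b) ≤ vecNorm a + vecNorm b := by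
  simpa only [vecNorm_eq_norm, WithLp.toLp_sub] using norm_sub_le _ _

lemma vecNorm_smul (c : ℝ) (v : n → ℝ) : vecNorm (c • v) = |c| * vecNorm v := by
  rw [vecNorm_eq_norm, WithLp.toLp_smul, norm_smul, Real.norm_eq_abs, vecNorm_eq_norm]

lemma matrixSpectralNorm_nonneg (A : Matrix m n ℝ) : 0 ≤ matrixSpectralNorm A :=
  Real.sSup_nonneg fun _ ⟨_, _, hy⟩ => hy ▸ vecNorm_nonneg _

open scoped Matrix.Norms.L2Operator in
lemma vecNorm_mulVec_le (A : Matrix m n ℝ) (x : n → ℝ) :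
    vecNorm (A *ᵥ x) ≤ matrixSpectralNorm A * vecNorm x := by
  classical
  -- Mathlib's ℓ² operator norm shows that the set defining `matrixSpectralNorm` is bounded.
  have hop (y : n → ℝ) : vecNorm (A *ᵥ y) ≤ ‖A‖ * vecNorm y := by
    simpa [vecNorm_eq_norm] using A.l2_opNorm_mulVec (WithLp.toLp 2 y)
  rcases (vecNorm_nonneg x).eq_or_lt with hx | hx
  · simpa [← hx] using hop x
  have hbdd : BddAbove ((fun y => vecNorm (A *ᵥ y)) '' {y | vecNorm y = 1}) := by
    refine ⟨‖A‖, ?_⟩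
    rintro _ ⟨y, hy, rfl⟩
    simpa [show vecNorm y = 1 from hy] using hop y
  have hunit : vecNorm ((vecNorm x)⁻¹ • x) = 1 := by
    rw [vecNorm_smul, abs_of_pos (inv_pos.2 hx), inv_mul_cancel₀ hx.ne']
  have := le_csSup hbdd ⟨_, hunit, rfl⟩
  dsimp only at this
  rw [Matrix.mulVec_smul, vecNorm_smul, abs_of_pos (inv_pos.2 hx), inv_mul_le_iff₀ hx] at this
  rwa [matrixSpectralNorm, mul_comm]

lemma vecNorm_mulVec_le_of_le {A : Matrix m n ℝ} {x : n → ℝ} {c b : ℝ}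
    (hA : matrixSpectralNorm A ≤ c) (hx : vecNorm x ≤ b) : vecNorm (A *ᵥ x) ≤ c * b :=
  (vecNorm_mulVec_le A x).trans <|
    mul_le_mul hA hx (vecNorm_nonneg x) ((matrixSpectralNorm_nonneg A).trans hA)

end

lemma le_geom_sum_mul_of_le_add_mul {a : ℕ → ℝ} {b r : ℝ} (hr : 0 ≤ r) (h0 : a 0 ≤ b)
    (hsucc : ∀ k, a (k + 1) ≤ b + r * a k) (k : ℕ) :
    a k ≤ (∑ l ∈ range (k + 1), r ^ l) * b := by
  induction k with
  | zero => simpa using h0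
  | succ k ih =>
    calc a (k + 1) ≤ b + r * ((∑ l ∈ range (k + 1), r ^ l) * b) :=
          (hsucc k).trans (by gcongr)
      _ = (∑ l ∈ range (k + 2), r ^ l) * b := by rw [geom_sum_succ (n := k + 1)]; ring

theorem forward_sweep_bound_general (N : ℕ) (κ ε θ W : ℝ)
    (hκ : 0 < κ) (hε1 : ε < 1) (hθ0 : 0 ≤ θ) (hθ : θ < 1 - ε) (hW : 0 ≤ W)
    (Q E : ℕ → Matrix (Fin N) (Fin N) ℝ)
    (hQinv : ∀ k, matrixSpectralNorm (Q k)⁻¹ ≤ 1 / (κ * (1 - ε)))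
    (hE : ∀ k, matrixSpectralNorm (E k) ≤ κ * θ)
    (w : ℕ → Fin N → ℝ) (hw : ∀ k, vecNorm (w k) ≤ W)
    (v : ℕ → Fin N → ℝ)
    (hv0 : v 0 = (Q 0)⁻¹.mulVec (w 0))
    (hvS : ∀ k, v (k + 1) = (Q (k + 1))⁻¹.mulVec (w (k + 1) - (E k).mulVec (v k))) :
    ∀ k, vecNorm (v k) ≤ W / (κ * (1 - ε - θ)) ∧
      vecNorm (v k) ≤ (∑ l ∈ Finset.range (k + 1), θ ^ l / (κ * (1 - ε) ^ (l + 1))) * W := by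
  have hε : 0 < 1 - ε := by linarith
  have hr0 : 0 ≤ θ / (1 - ε) := by positivity
  have hbound (k : ℕ) :
      vecNorm (v k) ≤ (∑ l ∈ range (k + 1), (θ / (1 - ε)) ^ l) * (W / (κ * (1 - ε))) := by
    refine le_geom_sum_mul_of_le_add_mul (a := fun k => vecNorm (v k)) hr0 ?_ (fun k => ?_) k
    · simpa [hv0, div_eq_inv_mul] using vecNorm_mulVec_le_of_le (hQinv 0) (hw 0)
    · calc vecNorm (v (k + 1)) ≤ 1 / (κ * (1 - ε)) * (W + κ * θ * vecNorm (v k)) := by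
            rw [hvS]
            exact vecNorm_mulVec_le_of_le (hQinv _) <| (vecNorm_sub_le _ _).trans <|
              add_le_add (hw _) (vecNorm_mulVec_le_of_le (hE k) le_rfl)
        _ = W / (κ * (1 - ε)) + θ / (1 - ε) * vecNorm (v k) := by field_simp
  intro k
  refine ⟨(hbound k).trans ?_, (hbound k).trans_eq ?_⟩
  · have hgeom : ∑ l ∈ range (k + 1), (θ / (1 - ε)) ^ l ≤ (1 - ε) / (1 - ε - θ) := by
      have h := geom_sum_Ico_le_of_lt_one (m := 0) (n := k + 1) hr0 ((div_lt_one hε).2 hθ)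
      rwa [← range_eq_Ico, pow_zero, one_sub_div hε.ne', one_div_div] at h
    calc (∑ l ∈ range (k + 1), (θ / (1 - ε)) ^ l) * (W / (κ * (1 - ε)))
        ≤ (1 - ε) / (1 - ε - θ) * (W / (κ * (1 - ε))) := by gcongr
      _ = W / (κ * (1 - ε - θ)) := by field_simp
  · rw [sum_mul, sum_mul]
    refine sum_congr rfl fun l _ => ?_
    rw [div_pow, pow_succ]
    field_simp

/-- uniform bound on the forward-sweep vectors
`v₀ = Q₀⁻¹ w₀`, `v_k = Q_k⁻¹ (w_k − E_{k−1} v_{k−1})`. -/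
theorem forward_sweep_bound (N : ℕ) (hN : 1 ≤ N) (κ ε θ W : ℝ)
    (hκ : 0 < κ) (hε0 : 0 ≤ ε) (hε1 : ε < 1) (hθ0 : 0 ≤ θ) (hθ : θ < 1 - ε) (hW : 0 ≤ W)
    (Q E : ℕ → Matrix (Fin N) (Fin N) ℝ)
    (hQunit : ∀ k, IsUnit (Q k))
    (hQinv : ∀ k, matrixSpectralNorm (Q k)⁻¹ ≤ 1 / (κ * (1 - ε)))
    (hE : ∀ k, matrixSpectralNorm (E k) ≤ κ * θ)
    (w : ℕ → Fin N → ℝ) (hw : ∀ k, vecNorm (w k) ≤ W)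
    (v : ℕ → Fin N → ℝ)
    (hv0 : v 0 = (Q 0)⁻¹.mulVec (w 0))
    (hvS : ∀ k, v (k + 1) = (Q (k + 1))⁻¹.mulVec (w (k + 1) - (E k).mulVec (v k))) :
    ∀ k, vecNorm (v k) ≤ W / (κ * (1 - ε - θ)) ∧
      vecNorm (v k) ≤ (∑ l ∈ Finset.range (k + 1), θ ^ l / (κ * (1 - ε) ^ (l + 1))) * W :=
  forward_sweep_bound_general N κ ε θ W hκ hε1 hθ0 hθ hW Q E hQinv hE w hw v hv0 hvS
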